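/- Let f = (f₁, …, f_n) be continuous functions ℝ → ℝ, x ≤ y ∈ ℝ, 1 ≤ m < ℓ ≤ n. Then for any fixed z ∈ [x,y], f[(x,ℓ)→(y,m)] = sup_{k∈{m,…,ℓ}} ( f[(x,ℓ)→(z,k)] + f[(z,k)→(y,m)] ). -/

import Mathlib

open Set

/-- A jump-time sequence encoding a nonincreasing cadlag path from `(x,l)` to `(y,m)`:
`t i` is the time at which the path jumps from line `i+1` to line `i`, with the
conventions `t l = x` and `t (m-1) = y`. -/
def IsJumpSeq (x y : ℝ) (m l : ℕ) (t : ℕ → ℝ) : Prop :=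
  t l = x ∧ t (m - 1) = y ∧ ∀ i j : ℕ, m - 1 ≤ i → i ≤ j → j ≤ l → t j ≤ t i

/-- Length of the path encoded by the jump-time sequence `t`: the sum of the increments
of `f` along the path, `∑_{i=m}^{l} (f i (t (i-1)) − f i (t i))`. -/
noncomputable def pathLen (f : ℕ → ℝ → ℝ) (m l : ℕ) (t : ℕ → ℝ) : ℝ :=
  ∑ i ∈ Finset.Icc m l, (f i (t (i - 1)) - f i (t i))

/-- Last passage value `f[(x,l)→(y,m)]`: supremum of path lengths over all paths from
`(x,l)` to `(y,m)`. -/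
noncomputable def lppValue (f : ℕ → ℝ → ℝ) (x : ℝ) (l : ℕ) (y : ℝ) (m : ℕ) : ℝ :=
  sSup (pathLen f m l '' {t | IsJumpSeq x y m l t})

open Pointwise

/-!
Cut every path at time `z`. Since `f (min a z) + f (max a z) = f a + f z`, the length of a
path `t` is the length of `min t z` plus that of `max t z`. If `t` is on line `k` at time `z`,
then `min t z` makes all its jumps below line `k` at time `z`, and `max t z` all its jumps above
line `k`; these contribute nothing, so the two pieces are a path `(x,ℓ) → (z,k)` and a path
`(z,k) → (y,m)`. Conversely, two such paths concatenate to a path `(x,ℓ) → (y,m)` that is on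
line `k` at time `z`. So the set of path lengths is the union over `k` of the sumsets of the
partial lengths, and `sSup (A + B) = sSup A + sSup B` gives the formula.
-/

theorem csSup_biUnion_add {ι M : Type*} [ConditionallyCompleteLattice M] [AddGroup M]
    [AddLeftMono M] [AddRightMono M] {K : Set ι} (hK : K.Finite) (hK₀ : K.Nonempty)
    {A B : ι → Set M} (hA : ∀ k ∈ K, (A k).Nonempty ∧ BddAbove (A k))
    (hB : ∀ k ∈ K, (B k).Nonempty ∧ BddAbove (B k)) :
    sSup (⋃ k ∈ K, A k + B k) = sSup ((fun k => sSup (A k) + sSup (B k)) '' K) := by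
  have hAB : ∀ k ∈ K, sSup (A k + B k) = sSup (A k) + sSup (B k) := fun k hk =>
    csSup_add (hA k hk).1 (hA k hk).2 (hB k hk).1 (hB k hk).2
  have hbdd : ∀ k ∈ K, BddAbove (A k + B k) := fun k hk => (hA k hk).2.add (hB k hk).2
  apply le_antisymm
  · obtain ⟨k₀, hk₀⟩ := hK₀
    refine csSup_le (((hA k₀ hk₀).1.add (hB k₀ hk₀).1).mono (subset_biUnion_of_mem hk₀)) ?_
    simp only [mem_iUnion]
    rintro s ⟨k, hk, hs⟩
    calc s ≤ sSup (A k + B k) := le_csSup (hbdd k hk) hs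
      _ = sSup (A k) + sSup (B k) := hAB k hk
      _ ≤ _ := le_csSup (hK.image _).bddAbove (mem_image_of_mem _ hk)
  · refine csSup_le (hK₀.image _) ?_
    rintro _ ⟨k, hk, rfl⟩
    dsimp only
    rw [← hAB k hk]
    exact csSup_le_csSup (hK.bddAbove_biUnion.2 hbdd) ((hA k hk).1.add (hB k hk).1)
      (subset_biUnion_of_mem (u := fun k => A k + B k) hk)

section Paths

variable {f : ℕ → ℝ → ℝ} {x y z : ℝ} {m k l : ℕ} {t t₁ t₂ : ℕ → ℝ}

theorem isJumpSeq_iff :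
    IsJumpSeq x y m l t ↔ t l = x ∧ t (m - 1) = y ∧ AntitoneOn t (Icc (m - 1) l) :=
  and_congr_right' <| and_congr_right'
    ⟨fun h _ hi _ hj hij => h _ _ hi.1 hij hj.2,
      fun h _ _ hi hij hj => h ⟨hi, hij.trans hj⟩ ⟨hi.trans hij, hj⟩ hij⟩

theorem IsJumpSeq.antitoneOn (ht : IsJumpSeq x y m l t) : AntitoneOn t (Icc (m - 1) l) :=
  (isJumpSeq_iff.1 ht).2.2

theorem IsJumpSeq.mapsTo (ht : IsJumpSeq x y m l t) : MapsTo t (Icc (m - 1) l) (Icc x y) := by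
  intro i hi
  have hl : l ∈ Icc (m - 1) l := ⟨hi.1.trans hi.2, le_rfl⟩
  have hm : m - 1 ∈ Icc (m - 1) l := ⟨le_rfl, hi.1.trans hi.2⟩
  exact ⟨ht.1 ▸ ht.antitoneOn hi hl hi.2, ht.2.1 ▸ ht.antitoneOn hm hi hi.1⟩

theorem exists_isJumpSeq (hxy : x ≤ y) (hm : 1 ≤ m) (hml : m ≤ l) :
    ∃ t, IsJumpSeq x y m l t := by
  refine ⟨fun i => if i < m then y else x,
    isJumpSeq_iff.2 ⟨if_neg hml.not_gt, if_pos (by omega), fun i _ j _ hij => ?_⟩⟩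
  dsimp only
  split_ifs <;> first | exact le_rfl | exact hxy | omega

theorem bddAbove_pathLen_image (hf : ∀ i, ContinuousOn (f i) (Icc x y)) (m l : ℕ) :
    BddAbove (pathLen f m l '' {t | IsJumpSeq x y m l t}) := by
  choose C hC using fun i => isCompact_Icc.exists_bound_of_continuousOn (hf i)
  refine ⟨∑ i ∈ Finset.Icc m l, 2 * C i, ?_⟩
  rintro _ ⟨t, ht, rfl⟩
  refine Finset.sum_le_sum fun i hi => ?_
  rw [Finset.mem_Icc] at hi
  have h₁ := hC i (t (i - 1)) (ht.mapsTo ⟨by omega, by omega⟩)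
  have h₂ := hC i (t i) (ht.mapsTo ⟨by omega, hi.2⟩)
  rw [Real.norm_eq_abs] at h₁ h₂
  linarith [le_abs_self (f i (t (i - 1))), neg_abs_le (f i (t i))]

theorem IsJumpSeq.exists_crossing (ht : IsJumpSeq x y m l t) (hml : m ≤ l) (hz : z ∈ Icc x y) :
    ∃ k ∈ Icc m l, t k ≤ z ∧ z ≤ t (k - 1) := by
  classical
  have htl : m ≤ l ∧ t l ≤ z := ⟨hml, ht.1 ▸ hz.1⟩
  have hex : ∃ i, m ≤ i ∧ t i ≤ z := ⟨l, htl⟩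
  obtain ⟨hmk, hkz⟩ := Nat.find_spec hex
  refine ⟨Nat.find hex, ⟨hmk, Nat.find_min' hex htl⟩, hkz, ?_⟩
  rcases hmk.eq_or_lt with h | h
  · rw [← h, ht.2.1]
    exact hz.2
  · exact le_of_not_ge fun hk => Nat.find_min hex (by omega) ⟨by omega, hk⟩

theorem IsJumpSeq.min_const (ht : IsJumpSeq x y m l t) (hmk : m ≤ k) (hk : z ≤ t (k - 1))
    (hxz : x ≤ z) : IsJumpSeq x z k l (fun i => min (t i) z) :=
  isJumpSeq_iff.2 ⟨by rw [ht.1, min_eq_left hxz], min_eq_right hk,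
    (ht.antitoneOn.mono (Icc_subset_Icc_left (by omega))).min antitoneOn_const⟩

theorem IsJumpSeq.max_const (ht : IsJumpSeq x y m l t) (hkl : k ≤ l) (hk : t k ≤ z)
    (hzy : z ≤ y) : IsJumpSeq z y m k (fun i => max (t i) z) :=
  isJumpSeq_iff.2 ⟨max_eq_right hk, by rw [ht.2.1, max_eq_left hzy],
    (ht.antitoneOn.mono (Icc_subset_Icc_right hkl)).max antitoneOn_const⟩

theorem IsJumpSeq.glue (h₁ : IsJumpSeq x z k l t₁) (h₂ : IsJumpSeq z y m k t₂) (hm : 1 ≤ m)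
    (hmk : m ≤ k) (hkl : k ≤ l) :
    IsJumpSeq x y m l (fun i => if k ≤ i then t₁ i else t₂ i) := by
  refine isJumpSeq_iff.2 ⟨by rw [if_pos hkl, h₁.1], by rw [if_neg (by omega), h₂.2.1],
    fun i hi j hj hij => ?_⟩
  simp only [mem_Icc] at hi hj
  dsimp only
  split_ifs
  · exact h₁.antitoneOn ⟨by omega, hi.2⟩ ⟨by omega, hj.2⟩ hij
  · exact (h₁.mapsTo ⟨by omega, hj.2⟩).2.trans (h₂.mapsTo ⟨hi.1, by omega⟩).1
  · omega
  · exact h₂.antitoneOn ⟨hi.1, by omega⟩ ⟨by omega, by omega⟩ hij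

theorem pathLen_congr {s : ℕ → ℝ} (h : EqOn s t (Icc (m - 1) l)) :
    pathLen f m l s = pathLen f m l t :=
  Finset.sum_congr rfl fun i hi => by
    rw [Finset.mem_Icc] at hi
    rw [h ⟨by omega, by omega⟩, h ⟨by omega, hi.2⟩]

theorem pathLen_eq_of_stationary {m' l' : ℕ} (hm : m' ≤ m) (hl : l ≤ l')
    (ht : ∀ i ∈ Finset.Icc m' l', i ∉ Finset.Icc m l → t (i - 1) = t i) :
    pathLen f m l t = pathLen f m' l' t :=
  Finset.sum_subset (Finset.Icc_subset_Icc hm hl) fun i hi hi' => by rw [ht i hi hi', sub_self]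

theorem pathLen_eq_min_add_max (f : ℕ → ℝ → ℝ) (m l : ℕ) (t : ℕ → ℝ) (z : ℝ) :
    pathLen f m l t =
      pathLen f m l (fun i => min (t i) z) + pathLen f m l (fun i => max (t i) z) := by
  have key : ∀ i a, f i a = f i (min a z) + f i (max a z) - f i z := by
    intro i a
    rcases le_total a z with h | h <;> simp [h]
  unfold pathLen
  rw [← Finset.sum_add_distrib]
  refine Finset.sum_congr rfl fun i _ => ?_
  rw [key i (t (i - 1)), key i (t i)]
  ring

theorem pathLen_split (ht : AntitoneOn t (Icc (m - 1) l)) (hmk : m ≤ k) (hkl : k ≤ l)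
    (hk : t k ≤ z) (hk' : z ≤ t (k - 1)) :
    pathLen f m l t =
      pathLen f k l (fun i => min (t i) z) + pathLen f m k (fun i => max (t i) z) := by
  rw [pathLen_eq_min_add_max f m l t z]
  congr 1
  · refine (pathLen_eq_of_stationary hmk le_rfl fun i hi hi' => ?_).symm
    simp only [Finset.mem_Icc] at hi hi'
    have h₁ : t (k - 1) ≤ t i := ht ⟨by omega, hi.2⟩ ⟨by omega, by omega⟩ (by omega)
    have h₂ : t (k - 1) ≤ t (i - 1) := ht ⟨by omega, by omega⟩ ⟨by omega, by omega⟩ (by omega)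
    rw [min_eq_right (hk'.trans h₁), min_eq_right (hk'.trans h₂)]
  · refine (pathLen_eq_of_stationary le_rfl hkl fun i hi hi' => ?_).symm
    simp only [Finset.mem_Icc] at hi hi'
    have h₁ : t i ≤ t k := ht ⟨by omega, by omega⟩ ⟨by omega, hi.2⟩ (by omega)
    have h₂ : t (i - 1) ≤ t k := ht ⟨by omega, by omega⟩ ⟨by omega, by omega⟩ (by omega)
    rw [max_eq_right (h₁.trans hk), max_eq_right (h₂.trans hk)]

theorem pathLen_glue (h₁ : IsJumpSeq x z k l t₁) (h₂ : IsJumpSeq z y m k t₂) (hm : 1 ≤ m)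
    (hmk : m ≤ k) (hkl : k ≤ l) :
    pathLen f m l (fun i => if k ≤ i then t₁ i else t₂ i) =
      pathLen f k l t₁ + pathLen f m k t₂ := by
  have hk : k - 1 ∈ Icc (m - 1) k := ⟨by omega, by omega⟩
  rw [pathLen_split (h₁.glue h₂ hm hmk hkl).antitoneOn hmk hkl
    (by simpa using (h₁.mapsTo ⟨by omega, hkl⟩).2)
    (by simpa [if_neg (show ¬k ≤ k - 1 by omega)] using (h₂.mapsTo hk).1)]
  congr 1
  · refine pathLen_congr fun i hi => ?_
    split_ifs
    · exact min_eq_left (h₁.mapsTo hi).2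
    · rw [show i = k - 1 by grind, h₁.2.1, min_eq_right (h₂.mapsTo hk).1]
  · refine pathLen_congr fun i hi => ?_
    split_ifs
    · rw [show i = k by grind, h₂.1, max_eq_right (h₁.mapsTo ⟨by omega, hkl⟩).2]
    · exact max_eq_left (h₂.mapsTo hi).1

theorem pathLen_image_eq_biUnion (hz : z ∈ Icc x y) (hm : 1 ≤ m) (hml : m ≤ l) :
    pathLen f m l '' {t | IsJumpSeq x y m l t} =
      ⋃ k ∈ Icc m l, pathLen f k l '' {t | IsJumpSeq x z k l t} +
        pathLen f m k '' {t | IsJumpSeq z y m k t} := by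
  ext s
  simp only [mem_iUnion, mem_image, mem_ofPred_eq, Set.mem_add, exists_prop]
  constructor
  · rintro ⟨t, ht, rfl⟩
    obtain ⟨k, hk, htk, htk'⟩ := ht.exists_crossing hml hz
    exact ⟨k, hk, _, ⟨_, ht.min_const hk.1 htk' hz.1, rfl⟩, _,
      ⟨_, ht.max_const hk.2 htk hz.2, rfl⟩, (pathLen_split ht.antitoneOn hk.1 hk.2 htk htk').symm⟩
  · rintro ⟨k, hk, _, ⟨t₁, h₁, rfl⟩, _, ⟨t₂, h₂, rfl⟩, rfl⟩
    exact ⟨_, h₁.glue h₂ hm hk.1 hk.2, pathLen_glue h₁ h₂ hm hk.1 hk.2⟩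

end Paths

theorem stmt18_general (f : ℕ → ℝ → ℝ) (hf : ∀ i, Continuous (f i))
    (x y z : ℝ) (hz : z ∈ Set.Icc x y)
    (m l : ℕ) (hm : 1 ≤ m) (hml : m < l) :
    lppValue f x l y m
      = sSup ((fun k => lppValue f x l z k + lppValue f z k y m) '' Set.Icc m l) := by
  rw [lppValue, pathLen_image_eq_biUnion hz hm hml.le]
  exact csSup_biUnion_add (finite_Icc m l) (nonempty_Icc.2 hml.le)
    (fun k hk => ⟨.image _ (exists_isJumpSeq hz.1 (hm.trans hk.1) hk.2),
      bddAbove_pathLen_image (fun i => (hf i).continuousOn) k l⟩)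
    (fun k hk => ⟨.image _ (exists_isJumpSeq hz.2 hm hk.1),
      bddAbove_pathLen_image (fun i => (hf i).continuousOn) m k⟩)

theorem stmt18 (n : ℕ) (f : ℕ → ℝ → ℝ) (hf : ∀ i, Continuous (f i))
    (x y z : ℝ) (hxy : x ≤ y) (hz : z ∈ Set.Icc x y)
    (m l : ℕ) (hm : 1 ≤ m) (hml : m < l) (hln : l ≤ n) :
    lppValue f x l y m
      = sSup ((fun k => lppValue f x l z k + lppValue f z k y m) '' Set.Icc m l) :=
  stmt18_general f hf x y z hz m l hm hml
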